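/- arXiv:1101.2968 — 5 statements merged into one kernel-verified Lean document; each statement's English description precedes it below -/
import Mathlib

section
/- Let $f$ be a finite-valued normal convex integrand and $P\ll\mathbb{P}$ a probability measure. Suppose there exists $Y\in L^1(\mathbb{P})$ with $\tilde f(\cdot,Y,dP/d\mathbb{P})^+\in L^1(\mathbb{P})$, where $\tilde f(\omega,y,z)=\sup_x(xy-zf(\omega,x))$. Then the functional $X\mapsto E_P[f(\cdot,X)]$ is a proper, convex, lower semicontinuous function on $L^\infty(\mathbb{P})$ with respect to the norm topology, provided additionally $E_P[f(\cdot,X_0)^+]<\infty$ for some $X_0\in L^\infty$. -/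
/-!
Under `dP = z dμ` with `z = dP/dμ`, the functional is `X ↦ ∫ z f(·, X) dμ`. The Fenchel
inequality `x Y - z f(x) ≤ f̃(Y, z) ≤ g` gives the integrable minorant
`z f(·, X) ≥ -(C |Y| + |g|)` on the ball `‖X‖_∞ ≤ C`. So the negative part is always
integrable (the functional never takes the value `⊥`), convexity of `f` passes through the
integral, and lower semicontinuity is Fatou's lemma for `z f(·, Xₙ) + C |Y| + |g| ≥ 0`, since
convergence in `L^∞` implies a.e. convergence and `f(ω, ·)` is continuous.
-/

open MeasureTheory ENNReal Filter Topology

namespace EReal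

theorem sub_eq_sub_of_add_eq_add {a c : EReal} {b d : ℝ} (h : a + d = c + b) : a - b = c - d :=
  calc a - b = a + d - d - b := by rw [EReal.add_sub_cancel_right]
    _ = c + b - b - d := by simp only [h, sub_eq_add_neg, add_right_comm]
    _ = c - d := by rw [EReal.add_sub_cancel_right]

end EReal

theorem lowerSemicontinuousAt_of_forall_le_liminf_seq {α E : Type*} [TopologicalSpace E]
    [CompleteLinearOrder α] {F : E → α} {x : E} [(𝓝 x).IsCountablyGenerated]
    (h : ∀ u : ℕ → E, Tendsto u atTop (𝓝 x) → F x ≤ liminf (fun n => F (u n)) atTop) :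
    LowerSemicontinuousAt F x := fun _ hy =>
  eventually_iff_seq_eventually.2 fun u hu => eventually_lt_of_lt_liminf (hy.trans_le (h u hu))

namespace MeasureTheory

variable {Ω : Type*} [MeasurableSpace Ω] {μ : Measure Ω} {φ ψ : Ω → ℝ}

/-- When both parts are infinite this is `⊤ - ⊤ = ⊥`. -/
noncomputable def erealIntegral (μ : Measure Ω) (φ : Ω → ℝ) : EReal :=
  ((∫⁻ ω, ENNReal.ofReal (φ ω) ∂μ : ℝ≥0∞) : EReal)
    - ((∫⁻ ω, ENNReal.ofReal (-φ ω) ∂μ : ℝ≥0∞) : EReal)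

theorem erealIntegral_eq_lintegral_max_sub (μ : Measure Ω) (φ : Ω → ℝ) :
    erealIntegral μ φ = ((∫⁻ ω, ENNReal.ofReal (max (φ ω) 0) ∂μ : ℝ≥0∞) : EReal)
      - ((∫⁻ ω, ENNReal.ofReal (max (-φ ω) 0) ∂μ : ℝ≥0∞) : EReal) := by
  simp only [erealIntegral, ENNReal.ofReal_max, ENNReal.ofReal_zero, max_zero]

theorem bot_lt_erealIntegral (hφ : ∫⁻ ω, ENNReal.ofReal (-φ ω) ∂μ ≠ ∞) :
    ⊥ < erealIntegral μ φ := by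
  rw [erealIntegral, ← EReal.coe_ennreal_toReal hφ]
  calc (⊥ : EReal) < 0 - _ := by rw [zero_sub, ← EReal.coe_neg]; exact EReal.bot_lt_coe _
    _ ≤ _ := EReal.sub_le_sub (EReal.coe_ennreal_nonneg _) le_rfl

theorem erealIntegral_lt_top (hφ : ∫⁻ ω, ENNReal.ofReal (φ ω) ∂μ ≠ ∞) :
    erealIntegral μ φ < ⊤ := by
  rw [erealIntegral, ← EReal.coe_ennreal_toReal hφ]
  calc _ ≤ _ - 0 := EReal.sub_le_sub le_rfl (EReal.coe_ennreal_nonneg _)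
    _ < ⊤ := by rw [sub_zero]; exact EReal.coe_lt_top _

theorem erealIntegral_eq_top (hpos : ∫⁻ ω, ENNReal.ofReal (φ ω) ∂μ = ∞)
    (hneg : ∫⁻ ω, ENNReal.ofReal (-φ ω) ∂μ ≠ ∞) : erealIntegral μ φ = ⊤ := by
  rw [erealIntegral, hpos, ← EReal.coe_ennreal_toReal hneg, EReal.coe_ennreal_top,
    EReal.top_sub_coe]

theorem erealIntegral_eq_integral (hφ : Integrable φ μ) : erealIntegral μ φ = ∫ ω, φ ω ∂μ := by
  have hneg : ∫⁻ ω, ENNReal.ofReal (-φ ω) ∂μ ≠ ∞ := hφ.neg.lintegral_lt_top.ne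
  rw [erealIntegral, ← EReal.coe_ennreal_toReal hφ.lintegral_lt_top.ne,
    ← EReal.coe_ennreal_toReal hneg, ← EReal.coe_sub,
    integral_eq_lintegral_pos_part_sub_lintegral_neg_part hφ]

theorem integrable_of_lintegral_ofReal_ne_top (hφ : AEStronglyMeasurable φ μ)
    (hpos : ∫⁻ ω, ENNReal.ofReal (φ ω) ∂μ ≠ ∞) (hneg : ∫⁻ ω, ENNReal.ofReal (-φ ω) ∂μ ≠ ∞) :
    Integrable φ μ := by
  have hparts {χ : Ω → ℝ} (hχ : AEStronglyMeasurable χ μ)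
      (hχ' : ∫⁻ ω, ENNReal.ofReal (χ ω) ∂μ ≠ ∞) : Integrable (fun ω => max (χ ω) 0) μ := by
    refine (lintegral_ofReal_ne_top_iff_integrable (f := fun ω => max (χ ω) 0) (by fun_prop)
      (ae_of_all _ fun _ => le_max_right _ _)).1 ?_
    simpa only [ENNReal.ofReal_max, ENNReal.ofReal_zero, max_zero] using hχ'
  exact ((hparts hφ hpos).sub (hparts hφ.neg hneg)).congr
    (ae_of_all _ fun ω => max_zero_sub_max_neg_zero_eq_self (φ ω))

theorem erealIntegral_mono (h : φ ≤ᵐ[μ] ψ) : erealIntegral μ φ ≤ erealIntegral μ ψ := by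
  refine EReal.sub_le_sub (EReal.coe_ennreal_le_coe_ennreal_iff.2 (lintegral_mono_ae ?_))
    (EReal.coe_ennreal_le_coe_ennreal_iff.2 (lintegral_mono_ae ?_))
  all_goals filter_upwards [h] with ω hω
  · exact ENNReal.ofReal_le_ofReal hω
  · exact ENNReal.ofReal_le_ofReal (neg_le_neg hω)

theorem lintegral_ofReal_const_mul {c : ℝ} (hc : 0 ≤ c) (φ : Ω → ℝ) :
    ∫⁻ ω, ENNReal.ofReal (c * φ ω) ∂μ = ENNReal.ofReal c * ∫⁻ ω, ENNReal.ofReal (φ ω) ∂μ := by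
  rw [← lintegral_const_mul' _ _ ENNReal.ofReal_ne_top]
  exact lintegral_congr fun ω => ENNReal.ofReal_mul hc

theorem erealIntegral_const_mul {c : ℝ} (hc : 0 ≤ c) (φ : Ω → ℝ) :
    erealIntegral μ (fun ω => c * φ ω) = c * erealIntegral μ φ := by
  have hc' : ((ENNReal.ofReal c : ℝ≥0∞) : EReal) = c := by
    rw [EReal.coe_ennreal_ofReal, max_eq_left hc]
  simp only [erealIntegral, ← mul_neg, lintegral_ofReal_const_mul hc, EReal.coe_ennreal_mul, hc']
  rw [EReal.mul_sub_of_nonneg_of_ne_top (EReal.coe_nonneg.2 hc) (EReal.coe_ne_top c)]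

theorem erealIntegral_add_le (hφ : AEStronglyMeasurable φ μ) (hψ : AEStronglyMeasurable ψ μ)
    (hφ' : ∫⁻ ω, ENNReal.ofReal (-φ ω) ∂μ ≠ ∞) (hψ' : ∫⁻ ω, ENNReal.ofReal (-ψ ω) ∂μ ≠ ∞) :
    erealIntegral μ (φ + ψ) ≤ erealIntegral μ φ + erealIntegral μ ψ := by
  by_cases hφ_top : ∫⁻ ω, ENNReal.ofReal (φ ω) ∂μ = ∞
  · rw [erealIntegral_eq_top hφ_top hφ', EReal.top_add_of_ne_bot (bot_lt_erealIntegral hψ').ne']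
    exact le_top
  by_cases hψ_top : ∫⁻ ω, ENNReal.ofReal (ψ ω) ∂μ = ∞
  · rw [erealIntegral_eq_top hψ_top hψ', EReal.add_top_of_ne_bot (bot_lt_erealIntegral hφ').ne']
    exact le_top
  have hφi := integrable_of_lintegral_ofReal_ne_top hφ hφ_top hφ'
  have hψi := integrable_of_lintegral_ofReal_ne_top hψ hψ_top hψ'
  rw [erealIntegral_eq_integral (hφi.add hψi), erealIntegral_eq_integral hφi,
    erealIntegral_eq_integral hψi, ← EReal.coe_add, ← integral_add hφi hψi]
  rfl

theorem lintegral_ofReal_neg_ne_top_of_neg_le {h : Ω → ℝ} (hh : Integrable h μ)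
    (hφh : ∀ᵐ ω ∂μ, -h ω ≤ φ ω) : ∫⁻ ω, ENNReal.ofReal (-φ ω) ∂μ ≠ ∞ := by
  refine ne_top_of_le_ne_top hh.lintegral_lt_top.ne (lintegral_mono_ae ?_)
  filter_upwards [hφh] with ω hω
  exact ENNReal.ofReal_le_ofReal (by linarith)

theorem erealIntegral_eq_lintegral_add_sub {h : Ω → ℝ} (hφ : AEMeasurable φ μ)
    (hh : Integrable h μ) (hh₀ : 0 ≤ h) (hφh : ∀ᵐ ω ∂μ, -h ω ≤ φ ω) :
    erealIntegral μ φ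
      = ((∫⁻ ω, ENNReal.ofReal (φ ω + h ω) ∂μ : ℝ≥0∞) : EReal) - ((∫ ω, h ω ∂μ : ℝ) : EReal) := by
  have hneg := lintegral_ofReal_neg_ne_top_of_neg_le hh hφh
  have hparts : ∀ᵐ ω ∂μ, ENNReal.ofReal (φ ω + h ω) + ENNReal.ofReal (-φ ω)
      = ENNReal.ofReal (φ ω) + ENNReal.ofReal (h ω) := by
    filter_upwards [hφh] with ω hω
    rcases le_total 0 (φ ω) with hφω | hφω
    · rw [ENNReal.ofReal_of_nonpos (neg_nonpos.2 hφω), add_zero, ENNReal.ofReal_add hφω (hh₀ ω)]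
    · rw [← ENNReal.ofReal_add (by linarith) (neg_nonneg.2 hφω), ENNReal.ofReal_of_nonpos hφω,
        zero_add]
      ring_nf
  have hsum : (∫⁻ ω, ENNReal.ofReal (φ ω + h ω) ∂μ) + ∫⁻ ω, ENNReal.ofReal (-φ ω) ∂μ
      = (∫⁻ ω, ENNReal.ofReal (φ ω) ∂μ) + ENNReal.ofReal (∫ ω, h ω ∂μ) := by
    rw [← lintegral_add_left' (by fun_prop), lintegral_congr_ae hparts,
      lintegral_add_left' (by fun_prop), ofReal_integral_eq_lintegral_ofReal hh (ae_of_all _ hh₀)]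
  have hint : ((ENNReal.ofReal (∫ ω, h ω ∂μ) : ℝ≥0∞) : EReal) = ∫ ω, h ω ∂μ := by
    rw [EReal.coe_ennreal_ofReal, max_eq_left (integral_nonneg hh₀)]
  rw [erealIntegral, ← EReal.coe_ennreal_toReal hneg]
  refine EReal.sub_eq_sub_of_add_eq_add ?_
  rw [EReal.coe_ennreal_toReal hneg, ← hint, ← EReal.coe_ennreal_add, ← EReal.coe_ennreal_add,
    hsum]

theorem erealIntegral_le_liminf {φ : ℕ → Ω → ℝ} {h : Ω → ℝ} (hφ : ∀ n, AEMeasurable (φ n) μ)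
    (hh : Integrable h μ) (hφh : ∀ᶠ n in atTop, ∀ᵐ ω ∂μ, -h ω ≤ φ n ω)
    (hφψ : ∀ᵐ ω ∂μ, Tendsto (fun n => φ n ω) atTop (𝓝 (ψ ω))) :
    erealIntegral μ ψ ≤ liminf (fun n => erealIntegral μ (φ n)) atTop := by
  -- Shifting by `|h|` reduces the claim to Fatou's lemma for `φ n + |h| ≥ 0`.
  set H : Ω → ℝ := fun ω => |h ω|
  have hφH : ∀ᶠ n in atTop, ∀ᵐ ω ∂μ, -H ω ≤ φ n ω :=
    hφh.mono fun n hn => hn.mono fun ω hω => (neg_le_neg (le_abs_self _)).trans hω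
  obtain ⟨N, hN⟩ := eventually_atTop.1 hφH
  have hψH : ∀ᵐ ω ∂μ, -H ω ≤ ψ ω := by
    filter_upwards [ae_all_iff.2 fun n => hN (n + N) (Nat.le_add_left N n), hφψ] with ω hω hlim
    exact ge_of_tendsto' ((tendsto_add_atTop_iff_nat N).2 hlim) hω
  set T : ℝ≥0∞ → EReal := fun t => (t : EReal) - ((∫ ω, H ω ∂μ : ℝ) : EReal)
  have hT_mono : Monotone T := fun s t hst =>
    EReal.sub_le_sub (EReal.coe_ennreal_le_coe_ennreal_iff.2 hst) le_rfl
  have hT_cont : Continuous T := continuous_iff_continuousAt.2 fun t =>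
    (EReal.continuousAt_add (Or.inr (by simp)) (Or.inr (by simp))).comp
      (continuous_coe_ennreal_ereal.prodMk continuous_const).continuousAt
  have hfatou : ∫⁻ ω, ENNReal.ofReal (ψ ω + H ω) ∂μ
      ≤ liminf (fun n => ∫⁻ ω, ENNReal.ofReal (φ n ω + H ω) ∂μ) atTop := by
    refine le_trans (lintegral_mono_ae ?_) (lintegral_liminf_le' fun n => by fun_prop)
    filter_upwards [hφψ] with ω hω
    exact (((ENNReal.continuous_ofReal.tendsto _).comp (hω.add_const (H ω))).liminf_eq).ge
  calc erealIntegral μ ψ = T (∫⁻ ω, ENNReal.ofReal (ψ ω + H ω) ∂μ) :=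
        erealIntegral_eq_lintegral_add_sub (aemeasurable_of_tendsto_metrizable_ae _ hφ hφψ)
          hh.abs (fun ω => abs_nonneg _) hψH
    _ ≤ T (liminf (fun n => ∫⁻ ω, ENNReal.ofReal (φ n ω + H ω) ∂μ) atTop) := hT_mono hfatou
    _ = liminf (fun n => T (∫⁻ ω, ENNReal.ofReal (φ n ω + H ω) ∂μ)) atTop :=
        hT_mono.map_liminf_of_continuousAt _ hT_cont.continuousAt
    _ = liminf (fun n => erealIntegral μ (φ n)) atTop := by
        refine liminf_congr (hφH.mono fun n hn => ?_)
        exact (erealIntegral_eq_lintegral_add_sub (hφ n) hh.abs (fun ω => abs_nonneg _) hn).symm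

theorem lintegral_ofReal_eq_rnDeriv_mul {P : Measure Ω} [SigmaFinite P]
    [P.HaveLebesgueDecomposition μ] (hac : P ≪ μ) (hφ : AEMeasurable φ μ) :
    ∫⁻ ω, ENNReal.ofReal (φ ω) ∂P = ∫⁻ ω, ENNReal.ofReal ((P.rnDeriv μ ω).toReal * φ ω) ∂μ := by
  rw [← lintegral_rnDeriv_mul hac (by fun_prop)]
  refine lintegral_congr_ae ?_
  filter_upwards [Measure.rnDeriv_lt_top P μ] with ω hω
  rw [ENNReal.ofReal_mul ENNReal.toReal_nonneg, ENNReal.ofReal_toReal hω.ne]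

theorem erealIntegral_eq_rnDeriv_mul {P : Measure Ω} [SigmaFinite P]
    [P.HaveLebesgueDecomposition μ] (hac : P ≪ μ) (hφ : AEMeasurable φ μ) :
    erealIntegral P φ = erealIntegral μ (fun ω => (P.rnDeriv μ ω).toReal * φ ω) := by
  simp only [erealIntegral, lintegral_ofReal_eq_rnDeriv_mul hac hφ,
    lintegral_ofReal_eq_rnDeriv_mul (φ := fun ω => -φ ω) hac hφ.neg, mul_neg]

theorem Lp.ae_norm_le_norm_top {E : Type*} [NormedAddCommGroup E] (f : Lp E ∞ μ) :
    ∀ᵐ ω ∂μ, ‖f ω‖ ≤ ‖f‖ := by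
  filter_upwards [ae_le_eLpNormEssSup (f := (f : Ω → E)) (μ := μ)] with ω hω
  rw [Lp.norm_def, eLpNorm_exponent_top, ← toReal_enorm]
  exact ENNReal.toReal_mono (by simpa [eLpNorm_exponent_top] using Lp.eLpNorm_ne_top f) hω

theorem Lp.ae_tendsto_of_tendsto_top {E : Type*} [NormedAddCommGroup E] {ι : Type*} [Countable ι]
    {l : Filter ι} {u : ι → Lp E ∞ μ} {f : Lp E ∞ μ} (hu : Tendsto u l (𝓝 f)) :
    ∀ᵐ ω ∂μ, Tendsto (fun i => u i ω) l (𝓝 (f ω)) := by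
  filter_upwards [ae_all_iff.2 fun i => Lp.ae_norm_le_norm_top (u i - f),
    ae_all_iff.2 fun i => Lp.coeFn_sub (u i) f] with ω hle hsub
  refine tendsto_iff_norm_sub_tendsto_zero.2
    (squeeze_zero (fun _ => norm_nonneg _) (fun i => ?_) (tendsto_iff_norm_sub_tendsto_zero.1 hu))
  simpa only [hsub i, Pi.sub_apply] using hle i

variable {F : Ω → ℝ → ℝ}

theorem _root_.Measurable.aemeasurable_comp_Lp {p : ℝ≥0∞} (hF : Measurable fun q : Ω × ℝ => F q.1 q.2)
    (X : Lp ℝ p μ) : AEMeasurable (fun ω => F ω (X ω)) μ :=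
  hF.comp_aemeasurable (aemeasurable_id.prodMk (Lp.aestronglyMeasurable X).aemeasurable)

def LocallyIntegrablyBoundedBelow (μ : Measure Ω) (F : Ω → ℝ → ℝ) : Prop :=
  ∀ C : ℝ, ∃ h : Ω → ℝ, Integrable h μ ∧ ∀ᵐ ω ∂μ, ∀ x, |x| ≤ C → -h ω ≤ F ω x

theorem locallyIntegrablyBoundedBelow_of_conjugate_le {f : Ω → ℝ → ℝ} {z W g : Ω → ℝ}
    (hW : Integrable W μ) (hg : Integrable g μ)
    (hWg : ∀ᵐ ω ∂μ, (⨆ x : ℝ, ((x * W ω - z ω * f ω x : ℝ) : EReal)) ≤ (g ω : EReal)) :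
    LocallyIntegrablyBoundedBelow μ (fun ω x => z ω * f ω x) := by
  intro C
  refine ⟨fun ω => C * |W ω| + |g ω|, (hW.abs.const_mul C).add hg.abs, ?_⟩
  filter_upwards [hWg] with ω hω x hx
  have hfenchel : x * W ω - z ω * f ω x ≤ g ω := EReal.coe_le_coe_iff.1 <|
    (le_iSup (fun x : ℝ => ((x * W ω - z ω * f ω x : ℝ) : EReal)) x).trans hω
  have hxW : |x * W ω| ≤ C * |W ω| := by
    rw [abs_mul]
    exact mul_le_mul_of_nonneg_right hx (abs_nonneg _)
  linarith [neg_abs_le (x * W ω), le_abs_self (g ω)]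

namespace LocallyIntegrablyBoundedBelow

theorem exists_minorant_Lp (hF : LocallyIntegrablyBoundedBelow μ F) (C : ℝ) :
    ∃ h : Ω → ℝ, Integrable h μ ∧ ∀ X : Lp ℝ ∞ μ, ‖X‖ ≤ C → ∀ᵐ ω ∂μ, -h ω ≤ F ω (X ω) := by
  obtain ⟨h, hh, hFh⟩ := hF C
  refine ⟨h, hh, fun X hX => ?_⟩
  filter_upwards [hFh, Lp.ae_norm_le_norm_top X] with ω hω hXω
  exact hω (X ω) (hXω.trans hX)

theorem lintegral_ofReal_neg_comp_ne_top (hF : LocallyIntegrablyBoundedBelow μ F)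
    (X : Lp ℝ ∞ μ) : ∫⁻ ω, ENNReal.ofReal (-F ω (X ω)) ∂μ ≠ ∞ := by
  obtain ⟨h, hh, hXh⟩ := hF.exists_minorant_Lp ‖X‖
  exact lintegral_ofReal_neg_ne_top_of_neg_le hh (hXh X le_rfl)

theorem erealIntegral_comp_smul_add_smul_le (hF : LocallyIntegrablyBoundedBelow μ F)
    (hFm : Measurable (fun p : Ω × ℝ => F p.1 p.2)) (hFc : ∀ᵐ ω ∂μ, ConvexOn ℝ Set.univ (F ω))
    (X Y : Lp ℝ ∞ μ) {a b : ℝ} (ha : 0 ≤ a) (hb : 0 ≤ b) (hab : a + b = 1) :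
    erealIntegral μ (fun ω => F ω ((a • X + b • Y : Lp ℝ ∞ μ) ω))
      ≤ a * erealIntegral μ (fun ω => F ω (X ω)) + b * erealIntegral μ (fun ω => F ω (Y ω)) := by
  have hmeas (c : ℝ) (Z : Lp ℝ ∞ μ) : AEStronglyMeasurable (fun ω => c * F ω (Z ω)) μ :=
    ((hFm.aemeasurable_comp_Lp Z).const_mul c).aestronglyMeasurable
  have hneg {c : ℝ} (hc : 0 ≤ c) (Z : Lp ℝ ∞ μ) :
      ∫⁻ ω, ENNReal.ofReal (-(c * F ω (Z ω))) ∂μ ≠ ∞ := by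
    simp only [← mul_neg, lintegral_ofReal_const_mul hc]
    exact ENNReal.mul_ne_top ENNReal.ofReal_ne_top (hF.lintegral_ofReal_neg_comp_ne_top Z)
  have hconv : ∀ᵐ ω ∂μ, F ω ((a • X + b • Y : Lp ℝ ∞ μ) ω) ≤ a * F ω (X ω) + b * F ω (Y ω) := by
    filter_upwards [hFc, Lp.coeFn_add (a • X) (b • Y), Lp.coeFn_smul a X, Lp.coeFn_smul b Y]
      with ω hω hadd hX hY
    rw [hadd, Pi.add_apply, hX, hY]
    exact hω.2 (Set.mem_univ _) (Set.mem_univ _) ha hb hab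
  calc _ ≤ erealIntegral μ ((fun ω => a * F ω (X ω)) + fun ω => b * F ω (Y ω)) :=
        erealIntegral_mono hconv
    _ ≤ erealIntegral μ (fun ω => a * F ω (X ω)) + erealIntegral μ (fun ω => b * F ω (Y ω)) :=
        erealIntegral_add_le (hmeas a X) (hmeas b Y) (hneg ha X) (hneg hb Y)
    _ = _ := by rw [erealIntegral_const_mul ha, erealIntegral_const_mul hb]

theorem lowerSemicontinuous_erealIntegral_comp (hF : LocallyIntegrablyBoundedBelow μ F)
    (hFm : Measurable (fun p : Ω × ℝ => F p.1 p.2)) (hFc : ∀ᵐ ω ∂μ, Continuous (F ω)) :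
    LowerSemicontinuous fun X : Lp ℝ ∞ μ => erealIntegral μ (fun ω => F ω (X ω)) := by
  intro X
  refine lowerSemicontinuousAt_of_forall_le_liminf_seq fun u hu => ?_
  obtain ⟨h, hh, hXh⟩ := hF.exists_minorant_Lp (‖X‖ + 1)
  refine erealIntegral_le_liminf (fun n => hFm.aemeasurable_comp_Lp (u n)) hh ?_ ?_
  · exact (hu.norm.eventually_lt_const (lt_add_one ‖X‖)).mono fun n hn => hXh (u n) hn.le
  · filter_upwards [Lp.ae_tendsto_of_tendsto_top hu, hFc] with ω hω hcont
    exact (hcont.tendsto _).comp hω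

end LocallyIntegrablyBoundedBelow

end MeasureTheory

theorem integral_functional_proper_convex_lsc_general {Ω : Type*} [MeasurableSpace Ω]
    (μ : Measure Ω) [IsProbabilityMeasure μ]
    (P : Measure Ω) [IsProbabilityMeasure P] (hac : P ≪ μ)
    (f : Ω → ℝ → ℝ)
    (hmeas : Measurable (fun p : Ω × ℝ => f p.1 p.2))
    (hconv : ∀ᵐ ω ∂μ, ConvexOn ℝ Set.univ (f ω) ∧ Continuous (f ω))
    -- dual integrability: ∃ Y ∈ L¹(μ) with f̃(·, Y, dP/dμ)⁺ ∈ L¹(μ)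
    (hdual : ∃ Y : Ω → ℝ, Integrable Y μ ∧ ∃ g : Ω → ℝ, Integrable g μ ∧
      ∀ᵐ ω ∂μ,
        (⨆ x : ℝ, ((x * Y ω - (P.rnDeriv μ ω).toReal * f ω x : ℝ) : EReal))
          ≤ (g ω : EReal))
    -- primal integrability: E_P[f(·,X₀)⁺] < ∞ for some X₀ ∈ L∞
    (hX0 : ∃ X₀ : Lp ℝ ⊤ μ, ∫⁻ ω, ENNReal.ofReal (max (f ω (X₀ ω)) 0) ∂P < ⊤) :
    (∀ X : Lp ℝ ⊤ μ,
        ⊥ < ((∫⁻ ω, ENNReal.ofReal (max (f ω (X ω)) 0) ∂P : ℝ≥0∞) : EReal)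
          - ((∫⁻ ω, ENNReal.ofReal (max (-(f ω (X ω))) 0) ∂P : ℝ≥0∞) : EReal)) ∧
    (∃ X : Lp ℝ ⊤ μ,
        (((∫⁻ ω, ENNReal.ofReal (max (f ω (X ω)) 0) ∂P : ℝ≥0∞) : EReal)
          - ((∫⁻ ω, ENNReal.ofReal (max (-(f ω (X ω))) 0) ∂P : ℝ≥0∞) : EReal)) < ⊤) ∧
    (∀ X Y : Lp ℝ ⊤ μ, ∀ a b : ℝ, 0 ≤ a → 0 ≤ b → a + b = 1 →
        (((∫⁻ ω, ENNReal.ofReal (max (f ω ((a • X + b • Y : Lp ℝ ⊤ μ) ω)) 0) ∂P : ℝ≥0∞) : EReal)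
          - ((∫⁻ ω, ENNReal.ofReal (max (-(f ω ((a • X + b • Y : Lp ℝ ⊤ μ) ω))) 0) ∂P : ℝ≥0∞) : EReal))
        ≤ (a : EReal) *
            (((∫⁻ ω, ENNReal.ofReal (max (f ω (X ω)) 0) ∂P : ℝ≥0∞) : EReal)
              - ((∫⁻ ω, ENNReal.ofReal (max (-(f ω (X ω))) 0) ∂P : ℝ≥0∞) : EReal))
          + (b : EReal) *
            (((∫⁻ ω, ENNReal.ofReal (max (f ω (Y ω)) 0) ∂P : ℝ≥0∞) : EReal)
              - ((∫⁻ ω, ENNReal.ofReal (max (-(f ω (Y ω))) 0) ∂P : ℝ≥0∞) : EReal))) ∧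
    LowerSemicontinuous (fun X : Lp ℝ ⊤ μ =>
        ((∫⁻ ω, ENNReal.ofReal (max (f ω (X ω)) 0) ∂P : ℝ≥0∞) : EReal)
          - ((∫⁻ ω, ENNReal.ofReal (max (-(f ω (X ω))) 0) ∂P : ℝ≥0∞) : EReal)) := by
  obtain ⟨W, hW, g, hg, hWg⟩ := hdual
  obtain ⟨X₀, hX₀⟩ := hX0
  set F : Ω → ℝ → ℝ := fun ω x => (P.rnDeriv μ ω).toReal * f ω x
  have hFb : LocallyIntegrablyBoundedBelow μ F :=
    locallyIntegrablyBoundedBelow_of_conjugate_le hW hg hWg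
  have hFm : Measurable (fun p : Ω × ℝ => F p.1 p.2) :=
    ((Measure.measurable_rnDeriv P μ).ennreal_toReal.comp measurable_fst).mul hmeas
  have hFP (X : Lp ℝ ∞ μ) :
      erealIntegral P (fun ω => f ω (X ω)) = erealIntegral μ (fun ω => F ω (X ω)) :=
    erealIntegral_eq_rnDeriv_mul hac (hmeas.aemeasurable_comp_Lp X)
  simp only [ENNReal.ofReal_max, ENNReal.ofReal_zero, max_zero] at hX₀
  simp only [← erealIntegral_eq_lintegral_max_sub]
  refine ⟨fun X => ?_, ⟨X₀, erealIntegral_lt_top hX₀.ne⟩, fun X Y a b ha hb hab => ?_, ?_⟩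
  · rw [hFP]
    exact bot_lt_erealIntegral (hFb.lintegral_ofReal_neg_comp_ne_top X)
  · simp only [hFP]
    exact hFb.erealIntegral_comp_smul_add_smul_le hFm
      (hconv.mono fun _ hω => hω.1.smul ENNReal.toReal_nonneg) X Y ha hb hab
  · simp only [hFP]
    exact hFb.lowerSemicontinuous_erealIntegral_comp hFm
      (hconv.mono fun _ hω => continuous_const.mul hω.2)

/-- Under the dual integrability condition, the integral functional
`X ↦ E_P[f(·,X)]` is a proper convex norm-lower-semicontinuous function on
`L^∞`. -/
theorem integral_functional_proper_convex_lsc {Ω : Type*} [MeasurableSpace Ω]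
    (μ : Measure Ω) [IsProbabilityMeasure μ] [SigmaFinite μ]
    (P : Measure Ω) [IsProbabilityMeasure P] (hac : P ≪ μ)
    (f : Ω → ℝ → ℝ)
    (hmeas : Measurable (fun p : Ω × ℝ => f p.1 p.2))
    (hconv : ∀ᵐ ω ∂μ, ConvexOn ℝ Set.univ (f ω) ∧ Continuous (f ω))
    -- dual integrability: ∃ Y ∈ L¹(μ) with f̃(·, Y, dP/dμ)⁺ ∈ L¹(μ)
    (hdual : ∃ Y : Ω → ℝ, Integrable Y μ ∧ ∃ g : Ω → ℝ, Integrable g μ ∧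
      ∀ᵐ ω ∂μ,
        (⨆ x : ℝ, ((x * Y ω - (P.rnDeriv μ ω).toReal * f ω x : ℝ) : EReal))
          ≤ (g ω : EReal))
    -- primal integrability: E_P[f(·,X₀)⁺] < ∞ for some X₀ ∈ L∞
    (hX0 : ∃ X₀ : Lp ℝ ⊤ μ, ∫⁻ ω, ENNReal.ofReal (max (f ω (X₀ ω)) 0) ∂P < ⊤) :
    (∀ X : Lp ℝ ⊤ μ,
        ⊥ < ((∫⁻ ω, ENNReal.ofReal (max (f ω (X ω)) 0) ∂P : ℝ≥0∞) : EReal)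
          - ((∫⁻ ω, ENNReal.ofReal (max (-(f ω (X ω))) 0) ∂P : ℝ≥0∞) : EReal)) ∧
    (∃ X : Lp ℝ ⊤ μ,
        (((∫⁻ ω, ENNReal.ofReal (max (f ω (X ω)) 0) ∂P : ℝ≥0∞) : EReal)
          - ((∫⁻ ω, ENNReal.ofReal (max (-(f ω (X ω))) 0) ∂P : ℝ≥0∞) : EReal)) < ⊤) ∧
    (∀ X Y : Lp ℝ ⊤ μ, ∀ a b : ℝ, 0 ≤ a → 0 ≤ b → a + b = 1 →
        (((∫⁻ ω, ENNReal.ofReal (max (f ω ((a • X + b • Y : Lp ℝ ⊤ μ) ω)) 0) ∂P : ℝ≥0∞) : EReal)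
          - ((∫⁻ ω, ENNReal.ofReal (max (-(f ω ((a • X + b • Y : Lp ℝ ⊤ μ) ω))) 0) ∂P : ℝ≥0∞) : EReal))
        ≤ (a : EReal) *
            (((∫⁻ ω, ENNReal.ofReal (max (f ω (X ω)) 0) ∂P : ℝ≥0∞) : EReal)
              - ((∫⁻ ω, ENNReal.ofReal (max (-(f ω (X ω))) 0) ∂P : ℝ≥0∞) : EReal))
          + (b : EReal) *
            (((∫⁻ ω, ENNReal.ofReal (max (f ω (Y ω)) 0) ∂P : ℝ≥0∞) : EReal)
              - ((∫⁻ ω, ENNReal.ofReal (max (-(f ω (Y ω))) 0) ∂P : ℝ≥0∞) : EReal))) ∧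
    LowerSemicontinuous (fun X : Lp ℝ ⊤ μ =>
        ((∫⁻ ω, ENNReal.ofReal (max (f ω (X ω)) 0) ∂P : ℝ≥0∞) : EReal)
          - ((∫⁻ ω, ENNReal.ofReal (max (-(f ω (X ω))) 0) ∂P : ℝ≥0∞) : EReal)) :=
  integral_functional_proper_convex_lsc_general μ P hac f hmeas hconv hdual hX0
end

section
/- Under the same assumptions, the robust Young inequality holds: for all $X\in L^\infty$ and $Y\in L^1$, $E[XY]\le \sup_{P\in\mathcal{P}}E_P[f(\cdot,X)]+\inf_{P\in\mathcal{P}}E[\tilde f(\cdot,Y,dP/d\mathbb{P})]$, whenever both sides are well defined (the first supremum finite for some $X$ and condition (integrability of $\tilde f(\cdot,Y_P,dP/d\mathbb{P})^+$ for each $P$) hold). -/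
open MeasureTheory ENNReal

/-- Positive part of an extended real number, as an element of `ℝ≥0∞`. -/
noncomputable def erealPos (x : EReal) : ℝ≥0∞ :=
  if x = ⊤ then ⊤ else ENNReal.ofReal x.toReal

/-- Integral of an `EReal`-valued function, defined as the difference of the
lower integrals of its positive and negative parts. -/
noncomputable def erealInt {Ω : Type*} [MeasurableSpace Ω] (ν : MeasureTheory.Measure Ω)
    (h : Ω → EReal) : EReal :=
  ((∫⁻ ω, erealPos (h ω) ∂ν : ℝ≥0∞) : EReal) - ((∫⁻ ω, erealPos (-(h ω)) ∂ν : ℝ≥0∞) : EReal)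

/-!
Pointwise Fenchel–Young, `x y ≤ z f(x) + f̃(y, z)` with `z = dP/dμ`, integrates to
`E[XY] ≤ E_P[f(X)] + E[f̃(Y, dP/dμ)]` for each `P ∈ 𝒫` (the first term transported from `P` to `μ`
by the density), provided both extended-real integrals on the right have finite negative parts.
For `E_P[f(X)]` this follows from the dual condition via Young at `(X, Y_P)`; for
`E[f̃(Y, dP/dμ)]` Young at `(X₀, Y)` bounds the negative part by `sup_P E_P[f(X₀)⁺] + C₀ E|Y|`,
uniformly in `P`. Taking the supremum over `P` of the first term and the infimum of the second is
then legitimate in `EReal`, where `⊥ + ⊤ = ⊥`, because the uniform bound keeps the infimum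
above `⊥`.
-/

namespace ENNReal

lemma ofReal_add_ofReal_neg_le_of_le_add {x a b : ℝ} (h : x ≤ a + b) :
    ENNReal.ofReal x + ENNReal.ofReal (-a) + ENNReal.ofReal (-b) ≤
      ENNReal.ofReal (-x) + ENNReal.ofReal a + ENNReal.ofReal b := by
  simp only [ENNReal.ofReal, ← ENNReal.coe_add, ENNReal.coe_le_coe, ← NNReal.coe_le_coe,
    NNReal.coe_add, Real.coe_toNNReal', max_def]
  split_ifs <;> linarith

end ENNReal

namespace EReal

lemma toENNReal_add_neg_le_of_le_add {x a b : EReal} (h : x ≤ a + b) :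
    x.toENNReal + (-a).toENNReal + (-b).toENNReal ≤
      (-x).toENNReal + a.toENNReal + b.toENNReal := by
  induction x <;> induction a <;> induction b <;> simp_all
  · exact ENNReal.ofReal_add_ofReal_neg_le_of_le_add (by exact_mod_cast h)
  · exact coe_ne_top _ (by exact_mod_cast h)

lemma coe_ennreal_sub_ne_bot (a : ℝ≥0∞) {b : ℝ≥0∞} (hb : b ≠ ⊤) : (a : EReal) - b ≠ ⊥ := by
  rw [← coe_ennreal_toReal hb, sub_eq_add_neg, ← coe_neg]
  exact add_ne_bot_iff.mpr ⟨coe_ennreal_ne_bot a, coe_ne_bot _⟩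

lemma coe_ennreal_sub_le_add_of_add_le {p n a₁ b₁ a₂ b₂ : ℝ≥0∞} (hb₁ : b₁ ≠ ⊤) (hb₂ : b₂ ≠ ⊤)
    (h : p + b₁ + b₂ ≤ n + a₁ + a₂) :
    (p : EReal) - n ≤ ((a₁ : EReal) - b₁) + ((a₂ : EReal) - b₂) := by
  rcases eq_or_ne n ⊤ with rfl | hn
  · simp [sub_top]
  rcases eq_or_ne a₁ ⊤ with rfl | ha₁
  · rw [coe_ennreal_top, top_sub (coe_ennreal_eq_top_iff.not.mpr hb₁),
      top_add_of_ne_bot (coe_ennreal_sub_ne_bot a₂ hb₂)]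
    exact le_top
  rcases eq_or_ne a₂ ⊤ with rfl | ha₂
  · rw [coe_ennreal_top, top_sub (coe_ennreal_eq_top_iff.not.mpr hb₂),
      add_top_of_ne_bot (coe_ennreal_sub_ne_bot a₁ hb₁)]
    exact le_top
  have hp : p ≠ ⊤ := ne_top_of_le_ne_top (by simp [*]) (le_self_add.trans (le_self_add.trans h))
  have hreal := (ENNReal.toReal_le_toReal (by simp [*]) (by simp [*])).mpr h
  rw [ENNReal.toReal_add (by simp [*]) hb₂, ENNReal.toReal_add hp hb₁,
    ENNReal.toReal_add (by simp [*]) ha₂, ENNReal.toReal_add hn ha₁] at hreal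
  rw [← coe_ennreal_toReal hp, ← coe_ennreal_toReal hn, ← coe_ennreal_toReal ha₁,
    ← coe_ennreal_toReal hb₁, ← coe_ennreal_toReal ha₂, ← coe_ennreal_toReal hb₂]
  exact_mod_cast (by linarith :
    p.toReal - n.toReal ≤ (a₁.toReal - b₁.toReal) + (a₂.toReal - b₂.toReal))

lemma le_iSup_add_iInf {ι : Type*} [Nonempty ι] {a b : ι → EReal} {c : EReal}
    (h : ∀ i, c ≤ a i + b i) (hb : ⨅ i, b i ≠ ⊥) : c ≤ (⨆ i, a i) + ⨅ i, b i := by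
  rcases eq_or_ne (⨆ i, a i) ⊥ with ha | ha
  · obtain ⟨i⟩ := ‹Nonempty ι›
    have hc := h i
    rw [iSup_eq_bot.mp ha i, bot_add, le_bot_iff] at hc
    exact hc ▸ bot_le
  refine le_add_of_forall_gt (.inl ha) (.inr hb) fun a' ha' b' hb' => ?_
  obtain ⟨i, hi⟩ := iInf_lt_iff.mp hb'
  exact (h i).trans (add_le_add ((le_iSup a i).trans ha'.le) hi.le)

end EReal

section erealInt

variable {Ω : Type*} [MeasurableSpace Ω] {ν : Measure Ω}

lemma erealInt_eq_sub_lintegral_toENNReal (h : Ω → EReal) :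
    erealInt ν h = ((∫⁻ ω, (h ω).toENNReal ∂ν : ℝ≥0∞) : EReal) - ∫⁻ ω, (-h ω).toENNReal ∂ν :=
  rfl

lemma erealInt_coe_of_integrable {φ : Ω → ℝ} (hφ : Integrable φ ν) :
    erealInt ν (fun ω => (φ ω : EReal)) = ((∫ ω, φ ω ∂ν : ℝ) : EReal) := by
  have hpos : ∫⁻ ω, ENNReal.ofReal (φ ω) ∂ν ≠ ⊤ := hφ.lintegral_lt_top.ne
  have hneg : ∫⁻ ω, ENNReal.ofReal (-φ ω) ∂ν ≠ ⊤ := hφ.neg.lintegral_lt_top.ne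
  simp only [erealInt_eq_sub_lintegral_toENNReal, ← EReal.coe_neg, EReal.real_coe_toENNReal]
  rw [integral_eq_lintegral_pos_part_sub_lintegral_neg_part hφ, EReal.coe_sub,
    EReal.coe_ennreal_toReal hpos, EReal.coe_ennreal_toReal hneg]

lemma neg_le_erealInt_of_lintegral_le {h : Ω → EReal} {M : ℝ≥0∞}
    (hM : ∫⁻ ω, (-h ω).toENNReal ∂ν ≤ M) : -(M : EReal) ≤ erealInt ν h := by
  rw [erealInt_eq_sub_lintegral_toENNReal, sub_eq_add_neg, ← zero_add (-(M : EReal))]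
  exact add_le_add (EReal.coe_ennreal_nonneg _) (EReal.neg_le_neg_iff.mpr (by exact_mod_cast hM))

/-- Only sums of nonnegative parts are integrated: pointwise
`h₀⁺ + h₁⁻ + h₂⁻ ≤ h₀⁻ + h₁⁺ + h₂⁺`, and `∫⁻` is additive once all but one summand is
measurable. -/
theorem erealInt_le_add {h₀ h₁ h₂ : Ω → EReal} (hm₀ : AEMeasurable h₀ ν)
    (hm₁ : AEMeasurable h₁ ν) (hneg₁ : ∫⁻ ω, (-h₁ ω).toENNReal ∂ν ≠ ⊤)
    (hneg₂ : ∫⁻ ω, (-h₂ ω).toENNReal ∂ν ≠ ⊤) (hle : ∀ᵐ ω ∂ν, h₀ ω ≤ h₁ ω + h₂ ω) :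
    erealInt ν h₀ ≤ erealInt ν h₁ + erealInt ν h₂ := by
  refine EReal.coe_ennreal_sub_le_add_of_add_le hneg₁ hneg₂ ?_
  calc ∫⁻ ω, (h₀ ω).toENNReal ∂ν + ∫⁻ ω, (-h₁ ω).toENNReal ∂ν + ∫⁻ ω, (-h₂ ω).toENNReal ∂ν
      ≤ ∫⁻ ω, (h₀ ω).toENNReal + (-h₁ ω).toENNReal + (-h₂ ω).toENNReal ∂ν :=
        (add_le_add_left (le_lintegral_add _ _) _).trans (le_lintegral_add _ _)
    _ ≤ ∫⁻ ω, (-h₀ ω).toENNReal + (h₁ ω).toENNReal + (h₂ ω).toENNReal ∂ν :=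
        lintegral_mono_ae (hle.mono fun _ => EReal.toENNReal_add_neg_le_of_le_add)
    _ = ∫⁻ ω, (-h₀ ω).toENNReal ∂ν + ∫⁻ ω, (h₁ ω).toENNReal ∂ν + ∫⁻ ω, (h₂ ω).toENNReal ∂ν := by
        have hm₀' : AEMeasurable (fun ω => (-h₀ ω).toENNReal) ν := hm₀.neg.ereal_toENNReal
        have hm₀₁ : AEMeasurable (fun ω => (-h₀ ω).toENNReal + (h₁ ω).toENNReal) ν :=
          hm₀'.add hm₁.ereal_toENNReal
        rw [lintegral_add_left' hm₀₁, lintegral_add_left' hm₀']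

end erealInt

section changeOfMeasure

variable {Ω : Type*} [MeasurableSpace Ω] {P μ : Measure Ω} [SigmaFinite P]
  [P.HaveLebesgueDecomposition μ]

lemma lintegral_ofReal_rnDeriv_mul (hPμ : P ≪ μ) {ψ : Ω → ℝ} (hψ : AEMeasurable ψ μ) :
    ∫⁻ ω, ENNReal.ofReal ((P.rnDeriv μ ω).toReal * ψ ω) ∂μ = ∫⁻ ω, ENNReal.ofReal (ψ ω) ∂P := by
  rw [← lintegral_rnDeriv_mul hPμ hψ.ennreal_ofReal]
  refine lintegral_congr_ae ?_
  filter_upwards [Measure.rnDeriv_ne_top P μ] with ω hω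
  rw [ENNReal.ofReal_mul ENNReal.toReal_nonneg, ENNReal.ofReal_toReal hω]

lemma erealInt_coe_eq_erealInt_rnDeriv_mul (hPμ : P ≪ μ) {ψ : Ω → ℝ} (hψ : AEMeasurable ψ μ) :
    erealInt P (fun ω => (ψ ω : EReal)) =
      erealInt μ (fun ω => (((P.rnDeriv μ ω).toReal * ψ ω : ℝ) : EReal)) := by
  have hneg := lintegral_ofReal_rnDeriv_mul hPμ hψ.neg
  simp only [Pi.neg_apply] at hneg
  simp only [erealInt_eq_sub_lintegral_toENNReal, ← EReal.coe_neg, EReal.real_coe_toENNReal,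
    ← mul_neg, lintegral_ofReal_rnDeriv_mul hPμ hψ, hneg]

end changeOfMeasure

/-- `fenchelConj φ y z` is the paper's `f̃(y, z) = sup_x (x y - z φ(x))`, the convex conjugate
of `z φ` evaluated at `y`. -/
noncomputable def fenchelConj (φ : ℝ → ℝ) (y z : ℝ) : EReal :=
  ⨆ x : ℝ, ((x * y - z * φ x : ℝ) : EReal)

lemma sub_le_fenchelConj (φ : ℝ → ℝ) (x y z : ℝ) :
    ((x * y - z * φ x : ℝ) : EReal) ≤ fenchelConj φ y z :=
  le_iSup (fun x => ((x * y - z * φ x : ℝ) : EReal)) x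

lemma mul_le_add_fenchelConj (φ : ℝ → ℝ) (x y z : ℝ) :
    ((x * y : ℝ) : EReal) ≤ ((z * φ x : ℝ) : EReal) + fenchelConj φ y z :=
  calc ((x * y : ℝ) : EReal) = ((z * φ x : ℝ) : EReal) + ((x * y - z * φ x : ℝ) : EReal) := by
        rw [← EReal.coe_add, add_sub_cancel]
    _ ≤ ((z * φ x : ℝ) : EReal) + fenchelConj φ y z := add_le_add le_rfl (sub_le_fenchelConj ..)

section young

variable {Ω : Type*} [MeasurableSpace Ω] {μ : Measure Ω} {f : Ω → ℝ → ℝ}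

lemma lintegral_ofReal_neg_mul_ne_top_of_fenchelConj_le {X Y g z : Ω → ℝ} {C : ℝ}
    (hX : AEStronglyMeasurable X μ) (hXC : ∀ ω, |X ω| ≤ C) (hY : Integrable Y μ)
    (hg : Integrable g μ) (hYg : ∀ᵐ ω ∂μ, fenchelConj (f ω) (Y ω) (z ω) ≤ g ω) :
    ∫⁻ ω, ENNReal.ofReal (-(z ω * f ω (X ω))) ∂μ ≠ ⊤ := by
  have hb : Integrable (fun ω => g ω - X ω * Y ω) μ :=
    hg.sub (hY.bdd_mul hX (ae_of_all _ fun ω => by simpa using hXC ω))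
  refine ne_top_of_le_ne_top hb.lintegral_lt_top.ne (lintegral_mono_ae (hYg.mono fun ω hω => ?_))
  have hYoung : X ω * Y ω - z ω * f ω (X ω) ≤ g ω := by
    exact_mod_cast (sub_le_fenchelConj (f ω) (X ω) (Y ω) (z ω)).trans hω
  exact ENNReal.ofReal_le_ofReal (by linarith)

variable {P : Measure Ω} [SigmaFinite P] [P.HaveLebesgueDecomposition μ]

lemma lintegral_neg_fenchelConj_le (hPμ : P ≪ μ) {X₀ Y : Ω → ℝ} {C₀ : ℝ}
    (hfX₀ : Measurable fun ω => f ω (X₀ ω)) (hX₀C : ∀ ω, |X₀ ω| ≤ C₀) :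
    ∫⁻ ω, (-fenchelConj (f ω) (Y ω) (P.rnDeriv μ ω).toReal).toENNReal ∂μ ≤
      ∫⁻ ω, ENNReal.ofReal (max (f ω (X₀ ω)) 0) ∂P + ∫⁻ ω, ENNReal.ofReal (C₀ * |Y ω|) ∂μ := by
  have hz : Measurable fun ω => (P.rnDeriv μ ω).toReal :=
    (Measure.measurable_rnDeriv P μ).ennreal_toReal
  have hpt : ∀ ω, (-fenchelConj (f ω) (Y ω) (P.rnDeriv μ ω).toReal).toENNReal ≤
      ENNReal.ofReal ((P.rnDeriv μ ω).toReal * max (f ω (X₀ ω)) 0) +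
        ENNReal.ofReal (C₀ * |Y ω|) := by
    intro ω
    set z := (P.rnDeriv μ ω).toReal
    have hf : z * f ω (X₀ ω) ≤ z * max (f ω (X₀ ω)) 0 :=
      mul_le_mul_of_nonneg_left (le_max_left _ _) ENNReal.toReal_nonneg
    have hX₀Y : -(X₀ ω * Y ω) ≤ C₀ * |Y ω| := by
      calc -(X₀ ω * Y ω) ≤ |X₀ ω| * |Y ω| := (neg_le_abs _).trans (abs_mul _ _).le
        _ ≤ C₀ * |Y ω| := mul_le_mul_of_nonneg_right (hX₀C ω) (abs_nonneg _)
    have hle :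
        -fenchelConj (f ω) (Y ω) z ≤ ((z * max (f ω (X₀ ω)) 0 + C₀ * |Y ω| : ℝ) : EReal) := by
      rw [EReal.neg_le, ← EReal.coe_neg]
      exact le_trans (by exact_mod_cast (by linarith)) (sub_le_fenchelConj (f ω) (X₀ ω) (Y ω) z)
    exact (EReal.toENNReal_le_toENNReal hle).trans ENNReal.ofReal_add_le
  calc _ ≤ ∫⁻ ω, ENNReal.ofReal ((P.rnDeriv μ ω).toReal * max (f ω (X₀ ω)) 0) +
        ENNReal.ofReal (C₀ * |Y ω|) ∂μ := lintegral_mono hpt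
    _ = _ := by
      have hm :
          Measurable fun ω => ENNReal.ofReal ((P.rnDeriv μ ω).toReal * max (f ω (X₀ ω)) 0) :=
        ENNReal.measurable_ofReal.comp (hz.mul (hfX₀.max measurable_const))
      rw [lintegral_add_left hm,
        lintegral_ofReal_rnDeriv_mul hPμ (hfX₀.max measurable_const).aemeasurable]

theorem integral_mul_le_erealInt_add_erealInt_fenchelConj (hPμ : P ≪ μ) {X Y : Ω → ℝ}
    (hfX : Measurable fun ω => f ω (X ω)) (hXY : Integrable (fun ω => X ω * Y ω) μ)
    (hA : ∫⁻ ω, ENNReal.ofReal (-((P.rnDeriv μ ω).toReal * f ω (X ω))) ∂μ ≠ ⊤)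
    (hB : ∫⁻ ω, (-fenchelConj (f ω) (Y ω) (P.rnDeriv μ ω).toReal).toENNReal ∂μ ≠ ⊤) :
    ((∫ ω, X ω * Y ω ∂μ : ℝ) : EReal) ≤ erealInt P (fun ω => (f ω (X ω) : EReal)) +
      erealInt μ (fun ω => fenchelConj (f ω) (Y ω) (P.rnDeriv μ ω).toReal) := by
  rw [← erealInt_coe_of_integrable hXY, erealInt_coe_eq_erealInt_rnDeriv_mul hPμ hfX.aemeasurable]
  refine erealInt_le_add hXY.aemeasurable.coe_real_ereal
    ((Measure.measurable_rnDeriv P μ).ennreal_toReal.mul hfX).coe_real_ereal.aemeasurable ?_ hB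
    (ae_of_all _ fun ω => mul_le_add_fenchelConj ..)
  simpa only [← EReal.coe_neg, EReal.real_coe_toENNReal] using hA

end young

theorem robust_young_inequality_general {Ω : Type*} [MeasurableSpace Ω]
    (μ : Measure Ω) [SigmaFinite μ]
    (PP : Set (Measure Ω)) (hne : PP.Nonempty)
    (hprob : ∀ P ∈ PP, IsProbabilityMeasure P) (hac : ∀ P ∈ PP, P ≪ μ)
    (f : Ω → ℝ → ℝ)
    (hmeas : Measurable (fun p : Ω × ℝ => f p.1 p.2))
    -- primal integrability: some bounded X₀ with sup_P E_P[f(·,X₀)⁺] < ∞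
    (hX0 : ∃ X₀ : Ω → ℝ, Measurable X₀ ∧ (∃ C : ℝ, ∀ ω, |X₀ ω| ≤ C) ∧
      (⨆ P : PP, ∫⁻ ω, ENNReal.ofReal (max (f ω (X₀ ω)) 0) ∂(P : Measure Ω)) < ⊤)
    -- dual integrability: for each P ∈ 𝒫 some Y_P ∈ L¹ with f̃(·,Y_P,dP/dμ)⁺ ∈ L¹
    (hdual : ∀ P ∈ PP, ∃ Y : Ω → ℝ, Integrable Y μ ∧ ∃ g : Ω → ℝ, Integrable g μ ∧
      ∀ᵐ ω ∂μ,
        (⨆ x : ℝ, ((x * Y ω - (P.rnDeriv μ ω).toReal * f ω x : ℝ) : EReal))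
          ≤ (g ω : EReal)) :
    ∀ X : Ω → ℝ, Measurable X → (∃ C : ℝ, ∀ ω, |X ω| ≤ C) →
    ∀ Y : Ω → ℝ, Integrable Y μ →
      ((∫ ω, X ω * Y ω ∂μ : ℝ) : EReal) ≤
        (⨆ P : PP, erealInt (P : Measure Ω) (fun ω => ((f ω (X ω) : ℝ) : EReal)))
        + ⨅ P : PP, erealInt μ (fun ω =>
            ⨆ x : ℝ, ((x * Y ω - ((P : Measure Ω).rnDeriv μ ω).toReal * f ω x : ℝ) : EReal)) := by
  rintro X hX ⟨C, hXC⟩ Y hY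
  obtain ⟨X₀, hX₀, ⟨C₀, hX₀C⟩, hK⟩ := hX0
  have : Nonempty PP := hne.to_subtype
  have hfX : Measurable fun ω => f ω (X ω) := hmeas.comp (measurable_id.prodMk hX)
  have hfX₀ : Measurable fun ω => f ω (X₀ ω) := hmeas.comp (measurable_id.prodMk hX₀)
  set K := ⨆ P : PP, ∫⁻ ω, ENNReal.ofReal (max (f ω (X₀ ω)) 0) ∂(P : Measure Ω)
  set J := ∫⁻ ω, ENNReal.ofReal (C₀ * |Y ω|) ∂μ
  have hKJ : K + J ≠ ⊤ :=
    (ENNReal.add_lt_top.mpr ⟨hK, (hY.abs.const_mul C₀).lintegral_lt_top⟩).ne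
  have hneg : ∀ P : PP, ∫⁻ ω,
      (-fenchelConj (f ω) (Y ω) ((P : Measure Ω).rnDeriv μ ω).toReal).toENNReal ∂μ ≤ K + J :=
    fun P => by
      have := hprob P P.2
      exact (lintegral_neg_fenchelConj_le (hac P P.2) hfX₀ hX₀C).trans
        (add_le_add (le_iSup_of_le P le_rfl) le_rfl)
  refine EReal.le_iSup_add_iInf (fun P => ?_) (ne_bot_of_le_ne_bot ?_
    (le_iInf fun P => neg_le_erealInt_of_lintegral_le (hneg P)))
  · have := hprob P P.2
    obtain ⟨Y', hY', g, hg, hY'g⟩ := hdual P P.2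
    exact integral_mul_le_erealInt_add_erealInt_fenchelConj (hac P P.2) hfX
      (hY.bdd_mul hX.aestronglyMeasurable (ae_of_all _ fun ω => by simpa using hXC ω))
      (lintegral_ofReal_neg_mul_ne_top_of_fenchelConj_le hX.aestronglyMeasurable hXC hY' hg hY'g)
      (ne_top_of_le_ne_top hKJ (hneg P))
  · exact EReal.neg_eq_bot_iff.not.mpr (EReal.coe_ennreal_eq_top_iff.not.mpr hKJ)

/-- The robust Fenchel–Young inequality:
`E[XY] ≤ sup_{P∈𝒫} E_P[f(·,X)] + inf_{P∈𝒫} E[f̃(·,Y,dP/dμ)]`. -/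
theorem robust_young_inequality {Ω : Type*} [MeasurableSpace Ω]
    (μ : Measure Ω) [IsProbabilityMeasure μ] [SigmaFinite μ]
    (PP : Set (Measure Ω)) (hne : PP.Nonempty)
    (hprob : ∀ P ∈ PP, IsProbabilityMeasure P) (hac : ∀ P ∈ PP, P ≪ μ)
    (hconvP : ∀ P ∈ PP, ∀ Q ∈ PP, ∀ a : ℝ, 0 ≤ a → a ≤ 1 →
      (ENNReal.ofReal a • P + ENNReal.ofReal (1 - a) • Q) ∈ PP)
    (f : Ω → ℝ → ℝ)
    (hmeas : Measurable (fun p : Ω × ℝ => f p.1 p.2))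
    (hconv : ∀ᵐ ω ∂μ, ConvexOn ℝ Set.univ (f ω) ∧ Continuous (f ω))
    -- primal integrability: some bounded X₀ with sup_P E_P[f(·,X₀)⁺] < ∞
    (hX0 : ∃ X₀ : Ω → ℝ, Measurable X₀ ∧ (∃ C : ℝ, ∀ ω, |X₀ ω| ≤ C) ∧
      (⨆ P : PP, ∫⁻ ω, ENNReal.ofReal (max (f ω (X₀ ω)) 0) ∂(P : Measure Ω)) < ⊤)
    -- dual integrability: for each P ∈ 𝒫 some Y_P ∈ L¹ with f̃(·,Y_P,dP/dμ)⁺ ∈ L¹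
    (hdual : ∀ P ∈ PP, ∃ Y : Ω → ℝ, Integrable Y μ ∧ ∃ g : Ω → ℝ, Integrable g μ ∧
      ∀ᵐ ω ∂μ,
        (⨆ x : ℝ, ((x * Y ω - (P.rnDeriv μ ω).toReal * f ω x : ℝ) : EReal))
          ≤ (g ω : EReal)) :
    ∀ X : Ω → ℝ, Measurable X → (∃ C : ℝ, ∀ ω, |X ω| ≤ C) →
    ∀ Y : Ω → ℝ, Integrable Y μ →
      ((∫ ω, X ω * Y ω ∂μ : ℝ) : EReal) ≤
        (⨆ P : PP, erealInt (P : Measure Ω) (fun ω => ((f ω (X ω) : ℝ) : EReal)))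
        + ⨅ P : PP, erealInt μ (fun ω =>
            ⨆ x : ℝ, ((x * Y ω - ((P : Measure Ω).rnDeriv μ ω).toReal * f ω x : ℝ) : EReal)) :=
  robust_young_inequality_general μ PP hne hprob hac f hmeas hX0 hdual
end

section
/- Let $P\ll\mathbb{P}$ be a probability measure and $f$ a finite-valued normal convex integrand with conjugate $f^*$. Then the following are equivalent: (i) there exists $Y\in L^1(\mathbb{P})$ with $\tilde f(\cdot,Y,dP/d\mathbb{P})^+\in L^1(\mathbb{P})$; (ii) there exists $\tilde Y\in L^1(P)$ with $f^*(\cdot,\tilde Y)^+\in L^1(P)$. -/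
/-!
Substituting `Y = (dP/dμ) Ỹ`, and conversely `Ỹ = Y / (dP/dμ)`, turns one supremum into the other:
for `z > 0` the perspective satisfies `f̃(ω, y, z) = z f*(ω, y / z)`, and multiplying or dividing
by the density exchanges integrability with respect to `μ` and `P`. Where the density vanishes,
`f̃(ω, 0, 0) = 0`, so the bound `z (f*)⁺` needs no information about `f*` there.
-/

open MeasureTheory ENNReal

noncomputable def convexConjugate (φ : ℝ → ℝ) (y : ℝ) : EReal :=
  ⨆ x : ℝ, ((x * y - φ x : ℝ) : EReal)

/-- The paper's `f̃(·, y, z)` for `f = φ`. -/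
noncomputable def perspectiveConjugate (φ : ℝ → ℝ) (y z : ℝ) : EReal :=
  ⨆ x : ℝ, ((x * y - z * φ x : ℝ) : EReal)

section Pointwise

variable {φ : ℝ → ℝ} {y z c : ℝ}

lemma convexConjugate_le_coe_iff : convexConjugate φ y ≤ c ↔ ∀ x, x * y - φ x ≤ c := by
  simp only [convexConjugate, iSup_le_iff, EReal.coe_le_coe_iff]

lemma perspectiveConjugate_le_coe_iff :
    perspectiveConjugate φ y z ≤ c ↔ ∀ x, x * y - z * φ x ≤ c := by
  simp only [perspectiveConjugate, iSup_le_iff, EReal.coe_le_coe_iff]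

lemma convexConjugate_div_le_of_perspectiveConjugate_le (hz : 0 < z)
    (h : perspectiveConjugate φ y z ≤ c) : convexConjugate φ (y / z) ≤ (c / z : ℝ) := by
  rw [perspectiveConjugate_le_coe_iff] at h
  rw [convexConjugate_le_coe_iff]
  intro x
  rw [le_div_iff₀ hz]
  calc (x * (y / z) - φ x) * z = x * y - z * φ x := by field_simp
    _ ≤ c := h x

lemma perspectiveConjugate_mul_le_of_convexConjugate_le (hz : 0 ≤ z)
    (h : 0 < z → convexConjugate φ y ≤ c) :
    perspectiveConjugate φ (z * y) z ≤ (z * max c 0 : ℝ) := by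
  rw [perspectiveConjugate_le_coe_iff]
  intro x
  rcases hz.eq_or_lt with rfl | hz
  · simp
  · have hx := (convexConjugate_le_coe_iff.mp (h hz)) x
    calc x * (z * y) - z * φ x = z * (x * y - φ x) := by ring
      _ ≤ z * max c 0 := mul_le_mul_of_nonneg_left (hx.trans (le_max_left c 0)) hz.le

end Pointwise

namespace MeasureTheory.Measure

variable {α : Type*} {m : MeasurableSpace α} {μ ν : Measure α}

lemma ae_toReal_rnDeriv_pos [HaveLebesgueDecomposition μ ν] [SigmaFinite μ] (hμν : μ ≪ ν) :
    ∀ᵐ x ∂μ, 0 < (μ.rnDeriv ν x).toReal := by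
  filter_upwards [rnDeriv_pos hμν, hμν.ae_le (rnDeriv_lt_top μ ν)] with x hpos hfin
  exact ENNReal.toReal_pos hpos.ne' hfin.ne

lemma integrable_div_toReal_rnDeriv [HaveLebesgueDecomposition μ ν] [SigmaFinite μ]
    (hμν : μ ≪ ν) {f : α → ℝ} (hf : Integrable f ν) :
    Integrable (fun x ↦ f x / (μ.rnDeriv ν x).toReal) μ := by
  have hρ : Measurable fun x ↦ (μ.rnDeriv ν x).toReal := (measurable_rnDeriv μ ν).ennreal_toReal
  rw [← integrable_toReal_rnDeriv_mul_iff hμν]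
  refine hf.mono (hρ.aemeasurable.mul (hf.aemeasurable.div hρ.aemeasurable)).aestronglyMeasurable
    (Filter.Eventually.of_forall fun x ↦ ?_)
  rcases eq_or_ne (μ.rnDeriv ν x).toReal 0 with h0 | h0
  · simp [h0]
  · rw [mul_div_cancel₀ _ h0]

end MeasureTheory.Measure

theorem dual_integrability_equiv_general {Ω : Type*} [MeasurableSpace Ω]
    (μ : Measure Ω) [SigmaFinite μ]
    (P : Measure Ω) [IsProbabilityMeasure P] (hac : P ≪ μ)
    (f : Ω → ℝ → ℝ) :
    (∃ Y : Ω → ℝ, Integrable Y μ ∧ ∃ g : Ω → ℝ, Integrable g μ ∧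
        ∀ᵐ ω ∂μ,
          (⨆ x : ℝ, ((x * Y ω - (P.rnDeriv μ ω).toReal * f ω x : ℝ) : EReal))
            ≤ (g ω : EReal)) ↔
    (∃ Ytil : Ω → ℝ, Integrable Ytil P ∧ ∃ g : Ω → ℝ, Integrable g P ∧
        ∀ᵐ ω ∂P,
          (⨆ x : ℝ, ((x * Ytil ω - f ω x : ℝ) : EReal)) ≤ (g ω : EReal)) := by
  set z : Ω → ℝ := fun ω ↦ (P.rnDeriv μ ω).toReal
  constructor
  · rintro ⟨Y, hY, g, hg, hle⟩
    refine ⟨fun ω ↦ Y ω / z ω, Measure.integrable_div_toReal_rnDeriv hac hY,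
      fun ω ↦ g ω / z ω, Measure.integrable_div_toReal_rnDeriv hac hg, ?_⟩
    filter_upwards [Measure.ae_toReal_rnDeriv_pos hac, hac.ae_le hle] with ω hz hω
    exact convexConjugate_div_le_of_perspectiveConjugate_le hz hω
  · rintro ⟨Ytil, hYt, g, hg, hle⟩
    refine ⟨fun ω ↦ z ω * Ytil ω, (integrable_toReal_rnDeriv_mul_iff hac).mpr hYt,
      fun ω ↦ z ω * max (g ω) 0, (integrable_toReal_rnDeriv_mul_iff hac).mpr hg.pos_part,
      ?_⟩
    filter_upwards [Measure.ae_rnDeriv_ne_zero_imp_of_ae μ hle] with ω hω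
    exact perspectiveConjugate_mul_le_of_convexConjugate_le toReal_nonneg
      fun hz ↦ hω (ENNReal.toReal_pos_iff.mp hz).1.ne'

/-- The two dual integrability conditions are equivalent: existence of
`Y ∈ L¹(μ)` with `f̃(·,Y,dP/dμ)⁺ ∈ L¹(μ)` is equivalent to existence of
`Ỹ ∈ L¹(P)` with `f*(·,Ỹ)⁺ ∈ L¹(P)`. -/
theorem dual_integrability_equiv {Ω : Type*} [MeasurableSpace Ω]
    (μ : Measure Ω) [IsProbabilityMeasure μ] [SigmaFinite μ]
    (P : Measure Ω) [IsProbabilityMeasure P] (hac : P ≪ μ)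
    (f : Ω → ℝ → ℝ)
    (hmeas : Measurable (fun p : Ω × ℝ => f p.1 p.2))
    (hconv : ∀ᵐ ω ∂μ, ConvexOn ℝ Set.univ (f ω) ∧ Continuous (f ω)) :
    (∃ Y : Ω → ℝ, Integrable Y μ ∧ ∃ g : Ω → ℝ, Integrable g μ ∧
        ∀ᵐ ω ∂μ,
          (⨆ x : ℝ, ((x * Y ω - (P.rnDeriv μ ω).toReal * f ω x : ℝ) : EReal))
            ≤ (g ω : EReal)) ↔
    (∃ Ytil : Ω → ℝ, Integrable Ytil P ∧ ∃ g : Ω → ℝ, Integrable g P ∧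
        ∀ᵐ ω ∂P,
          (⨆ x : ℝ, ((x * Ytil ω - f ω x : ℝ) : EReal)) ≤ (g ω : EReal)) :=
  dual_integrability_equiv_general μ P hac f
end

section
/- Let $E$ be a topological vector space with dual $E^*$, $C\subset E$ a convex cone, and $g:E\to\mathbb{R}\cup\{-\infty\}$ a proper concave function continuous at some point $x_0\in C$. Then $\sup_{x\in C}g(x)=\min_{y\in C^\circ}(-g_*(y))$, where $g_*(y)=\inf_{x\in E}(\langle x,y\rangle-g(x))$ and $C^\circ=\{y\in E^*: \langle x,y\rangle\le 0\ \forall x\in C\}$, and the minimum on the right-hand side is attained. -/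
/-!
If `M = sup_C g` is finite, the strict hypograph `{(x, t) | t < g x}` of `g` is convex, and
continuity of `g` at `x₀` puts `(x₀, t)` in its interior for `t < g x₀`; it misses
`C × [M, ∞)`. A Hahn–Banach functional `(x, t) ↦ φ x + s t` separating the two sets has
`s > 0`, `φ ≥ 0` on the cone `C`, and `g ≤ M - φ / s` everywhere, so `y = -φ / s` lies in the
polar cone and `-g_*(y) ≤ M`. The reverse inequality holds for every `y` in the polar cone
(weak duality).
-/

open Set

def strictHypograph {E : Type*} (g : E → EReal) : Set (E × ℝ) := {p | (p.2 : EReal) < g p.1}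

lemma EReal.coe_neg_le_coe_sub_of_le_coe_add {a r : ℝ} {b : EReal}
    (h : b ≤ ((r + a : ℝ) : EReal)) :
    ((-r : ℝ) : EReal) ≤ a - b := by
  induction b using EReal.rec with
  | bot => simp
  | coe b =>
    norm_cast at h ⊢
    linarith
  | top => exact absurd (top_le_iff.1 h) (EReal.coe_ne_top _)

lemma nonneg_of_forall_le_mul_add {a b u : ℝ} (h : ∀ c : ℝ, 0 ≤ c → u ≤ c * a + b) : 0 ≤ a := by
  by_contra! ha
  have := h ((b - u + 1) / -a) (div_nonneg (by linarith [h 0 le_rfl]) (neg_nonneg.2 ha.le))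
  have hc : (b - u + 1) / -a * a = -(b - u + 1) := by
    rw [div_neg, neg_mul, div_mul_cancel₀ _ ha.ne]
  linarith

lemma iSup_le_neg_iInf_sub {E : Type*} {C : Set E} {g : E → EReal} {y : E → ℝ}
    (hy : ∀ x ∈ C, y x ≤ 0) : ⨆ x ∈ C, g x ≤ -(⨅ x : E, ((y x : ℝ) : EReal) - g x) :=
  iSup₂_le fun x hx => EReal.le_neg_of_le_neg <| (iInf_le _ x).trans <| by
    simpa only [zero_sub] using EReal.sub_le_sub (EReal.coe_nonpos.2 (hy x hx)) le_rfl

lemma mem_interior_strictHypograph {E : Type*} [TopologicalSpace E] {g : E → EReal} {x : E}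
    {t : ℝ} (hcont : ContinuousAt g x) (ht : (t : EReal) < g x) :
    (x, t) ∈ interior (strictHypograph g) :=
  mem_interior_iff_mem_nhds.2 <|
    (continuous_coe_real_ereal.comp continuous_snd).continuousAt.eventually_lt
      (hcont.comp continuousAt_fst) ht

section

variable {E : Type*} [AddCommGroup E] [Module ℝ E] {g : E → EReal}

lemma convex_strictHypograph
    (hconc : ∀ x y : E, ∀ a b : ℝ, 0 ≤ a → 0 ≤ b → a + b = 1 →
      (a : EReal) * g x + (b : EReal) * g y ≤ g (a • x + b • y)) :
    Convex ℝ (strictHypograph g) := by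
  rintro ⟨x, t⟩ hxt ⟨z, τ⟩ hzτ a b ha hb hab
  obtain ⟨t', htt', ht'⟩ := EReal.lt_iff_exists_real_btwn.1 hxt
  obtain ⟨τ', hττ', hτ'⟩ := EReal.lt_iff_exists_real_btwn.1 hzτ
  have hreal : a * t + b * τ < a * t' + b * τ' := by
    rcases ha.eq_or_lt with rfl | ha
    · simp_all [EReal.coe_lt_coe_iff]
    · exact add_lt_add_of_lt_of_le (mul_lt_mul_of_pos_left (EReal.coe_lt_coe_iff.1 htt') ha)
        (mul_le_mul_of_nonneg_left (EReal.coe_lt_coe_iff.1 hττ').le hb)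
  show ((a * t + b * τ : ℝ) : EReal) < g (a • x + b • z)
  calc ((a * t + b * τ : ℝ) : EReal) < ((a * t' + b * τ' : ℝ) : EReal) := EReal.coe_lt_coe hreal
    _ = (a : EReal) * t' + (b : EReal) * τ' := by norm_cast
    _ ≤ (a : EReal) * g x + (b : EReal) * g z := by gcongr
    _ ≤ g (a • x + b • z) := hconc x z a b ha hb hab

lemma exists_separation_strictHypograph [TopologicalSpace E] [IsTopologicalAddGroup E]
    [ContinuousSMul ℝ E] {C : Set E} (hCconv : Convex ℝ C)
    (hconc : ∀ x y : E, ∀ a b : ℝ, 0 ≤ a → 0 ≤ b → a + b = 1 →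
      (a : EReal) * g x + (b : EReal) * g y ≤ g (a • x + b • y))
    {x₀ : E} {t₀ r : ℝ} (hcont : ContinuousAt g x₀) (ht₀ : (t₀ : EReal) < g x₀)
    (hr : ∀ x ∈ C, g x ≤ r) :
    ∃ (φ : E →L[ℝ] ℝ) (s u : ℝ), φ x₀ + t₀ * s < u ∧
      (∀ x (t : ℝ), (t : EReal) < g x → φ x + t * s ≤ u) ∧
      ∀ x ∈ C, ∀ t, r ≤ t → u ≤ φ x + t * s := by
  have hA := convex_strictHypograph hconc
  have h₀ := mem_interior_strictHypograph hcont ht₀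
  have hdisj : Disjoint (interior (strictHypograph g)) (C ×ˢ Ici r) := by
    refine disjoint_left.2 fun ⟨x, t⟩ hxt ⟨hx, hrt⟩ => ?_
    have : (t : EReal) < r := (interior_subset hxt).trans_le (hr x hx)
    exact (EReal.coe_lt_coe_iff.1 this).not_ge hrt
  obtain ⟨f, u, hfA, hfB⟩ :=
    geometric_hahn_banach_open hA.interior isOpen_interior (hCconv.prod (convex_Ici r)) hdisj
  obtain ⟨φ, s, hf⟩ : ∃ (φ : E →L[ℝ] ℝ) (s : ℝ), ∀ x t, f (x, t) = φ x + t * s := by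
    refine ⟨f.comp (.inl ℝ E ℝ), f (0, 1), fun x t => ?_⟩
    have hxt : ((x, t) : E × ℝ) = (x, 0) + t • (0, 1) := by simp
    rw [hxt, map_add, map_smul, smul_eq_mul]
    rfl
  have hf_le : ∀ p ∈ strictHypograph g, f p ≤ u := by
    intro p hp
    have hcl : p ∈ closure (interior (strictHypograph g)) := by
      rw [hA.closure_interior_eq_closure_of_nonempty_interior ⟨_, h₀⟩]
      exact subset_closure hp
    exact closure_minimal (fun q hq => (hfA q hq).le)
      (isClosed_le f.continuous continuous_const) hcl
  refine ⟨φ, s, u, ?_, fun x t ht => ?_, fun x hx t ht => ?_⟩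
  · simpa only [hf] using hfA _ h₀
  · simpa only [hf] using hf_le (x, t) ht
  · simpa only [hf] using hfB (x, t) ⟨hx, ht⟩

lemma exists_polar_le_of_separation [TopologicalSpace E] {C : Set E}
    (hCcone : ∀ x ∈ C, ∀ c : ℝ, 0 ≤ c → c • x ∈ C) {x₀ : E} (hx₀ : x₀ ∈ C)
    {φ : E →L[ℝ] ℝ} {s u t₀ r : ℝ} (h₀ : φ x₀ + t₀ * s < u)
    (hA : ∀ x (t : ℝ), (t : EReal) < g x → φ x + t * s ≤ u)
    (hB : ∀ x ∈ C, ∀ t, r ≤ t → u ≤ φ x + t * s) :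
    ∃ y : E →L[ℝ] ℝ, (∀ x ∈ C, y x ≤ 0) ∧ ∀ x, g x ≤ ((r + y x : ℝ) : EReal) := by
  have h0C : (0 : E) ∈ C := by simpa using hCcone x₀ hx₀ 0 le_rfl
  have hur : u ≤ r * s := by simpa using hB 0 h0C r le_rfl
  have hs_nonneg : 0 ≤ s :=
    nonneg_of_forall_le_mul_add (u := u) (b := φ x₀ + r * s) fun c hc => by
      linarith [hB x₀ hx₀ (r + c) (by linarith)]
  have hs_ne : s ≠ 0 := by
    rintro rfl
    linarith [hB x₀ hx₀ r le_rfl]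
  have hs : 0 < s := hs_nonneg.lt_of_ne' hs_ne
  refine ⟨(-s⁻¹) • φ, fun x hx => ?_, fun x => ?_⟩
  · have hφ : 0 ≤ φ x := nonneg_of_forall_le_mul_add fun c hc => by
      simpa using hB (c • x) (hCcone x hx c hc) r le_rfl
    simpa using mul_nonneg (inv_nonneg.2 hs.le) hφ
  · refine EReal.ge_of_forall_gt_iff_ge.1 fun t ht => EReal.coe_le_coe_iff.2 ?_
    have hbound : (r + -s⁻¹ * φ x) * s = r * s - φ x := by field_simp; ring
    have : t * s ≤ (r + -s⁻¹ * φ x) * s := by linarith [hA x t ht]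
    simpa using le_of_mul_le_mul_right this hs

lemma exists_polar_neg_iInf_le_iSup [TopologicalSpace E] [IsTopologicalAddGroup E]
    [ContinuousSMul ℝ E] {C : Set E} (hCconv : Convex ℝ C)
    (hCcone : ∀ x ∈ C, ∀ c : ℝ, 0 ≤ c → c • x ∈ C)
    (hconc : ∀ x y : E, ∀ a b : ℝ, 0 ≤ a → 0 ≤ b → a + b = 1 →
      (a : EReal) * g x + (b : EReal) * g y ≤ g (a • x + b • y))
    {x₀ : E} (hx₀ : x₀ ∈ C) (hg₀ : ⊥ < g x₀) (hcont : ContinuousAt g x₀) :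
    ∃ y : E →L[ℝ] ℝ, (∀ x ∈ C, y x ≤ 0) ∧
      -(⨅ x : E, (((y x : ℝ) : EReal) - g x)) ≤ ⨆ x ∈ C, g x := by
  rcases eq_top_or_lt_top (⨆ x ∈ C, g x) with hM | hM
  · exact ⟨0, by simp, hM ▸ le_top⟩
  have hM_ne_bot : ⨆ x ∈ C, g x ≠ ⊥ :=
    ne_bot_of_le_ne_bot hg₀.ne' (le_iSup₂ (f := fun x (_ : x ∈ C) => g x) x₀ hx₀)
  obtain ⟨r, hr⟩ : ∃ r : ℝ, (r : EReal) = ⨆ x ∈ C, g x := ⟨_, EReal.coe_toReal hM.ne hM_ne_bot⟩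
  obtain ⟨t₀, -, ht₀⟩ := EReal.lt_iff_exists_real_btwn.1 hg₀
  obtain ⟨φ, s, u, h₀, hA, hB⟩ := exists_separation_strictHypograph hCconv hconc hcont ht₀
    fun x hx => hr ▸ le_iSup₂ (f := fun x (_ : x ∈ C) => g x) x hx
  obtain ⟨y, hyC, hy⟩ := exists_polar_le_of_separation hCcone hx₀ h₀ hA hB
  refine ⟨y, hyC, ?_⟩
  rw [← hr, EReal.neg_le, ← EReal.coe_neg]
  exact le_iInf fun x => EReal.coe_neg_le_coe_sub_of_le_coe_add (hy x)

end

theorem fenchel_duality_cone_general {E : Type*} [AddCommGroup E] [Module ℝ E]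
    [TopologicalSpace E] [IsTopologicalAddGroup E] [ContinuousSMul ℝ E]
    (C : Set E) (hCconv : Convex ℝ C)
    (hCcone : ∀ x ∈ C, ∀ c : ℝ, 0 ≤ c → c • x ∈ C)
    (g : E → EReal)
    (hconc : ∀ x y : E, ∀ a b : ℝ, 0 ≤ a → 0 ≤ b → a + b = 1 →
      (a : EReal) * g x + (b : EReal) * g y ≤ g (a • x + b • y))
    (x₀ : E) (hx₀ : x₀ ∈ C) (hg₀ : ⊥ < g x₀) (hcont : ContinuousAt g x₀) :
    ∃ y : E →L[ℝ] ℝ, (∀ x ∈ C, y x ≤ 0) ∧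
      (⨆ x ∈ C, g x) = -(⨅ x : E, (((y x : ℝ) : EReal) - g x)) ∧
      ∀ y' : E →L[ℝ] ℝ, (∀ x ∈ C, y' x ≤ 0) →
        -(⨅ x : E, (((y x : ℝ) : EReal) - g x))
          ≤ -(⨅ x : E, (((y' x : ℝ) : EReal) - g x)) := by
  obtain ⟨y, hyC, hy⟩ := exists_polar_neg_iInf_le_iSup hCconv hCcone hconc hx₀ hg₀ hcont
  exact ⟨y, hyC, le_antisymm (iSup_le_neg_iInf_sub hyC) hy,
    fun y' hy' => hy.trans (iSup_le_neg_iInf_sub hy')⟩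

/-- Fenchel's duality theorem (Rockafellar's version) for a convex cone `C`:
if a proper concave function `g` is continuous at some point of `C`, then
`sup_{x ∈ C} g(x) = min_{y ∈ C°} (-g_*(y))` and the minimum is attained. -/
theorem fenchel_duality_cone {E : Type*} [AddCommGroup E] [Module ℝ E]
    [TopologicalSpace E] [IsTopologicalAddGroup E] [ContinuousSMul ℝ E]
    (C : Set E) (hCconv : Convex ℝ C)
    (hCcone : ∀ x ∈ C, ∀ c : ℝ, 0 ≤ c → c • x ∈ C)
    (g : E → EReal)
    (htop : ∀ x, g x < ⊤)
    (hconc : ∀ x y : E, ∀ a b : ℝ, 0 ≤ a → 0 ≤ b → a + b = 1 →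
      (a : EReal) * g x + (b : EReal) * g y ≤ g (a • x + b • y))
    (x₀ : E) (hx₀ : x₀ ∈ C) (hg₀ : ⊥ < g x₀) (hcont : ContinuousAt g x₀) :
    ∃ y : E →L[ℝ] ℝ, (∀ x ∈ C, y x ≤ 0) ∧
      (⨆ x ∈ C, g x) = -(⨅ x : E, (((y x : ℝ) : EReal) - g x)) ∧
      ∀ y' : E →L[ℝ] ℝ, (∀ x ∈ C, y' x ≤ 0) →
        -(⨅ x : E, (((y x : ℝ) : EReal) - g x))
          ≤ -(⨅ x : E, (((y' x : ℝ) : EReal) - g x)) :=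
  fenchel_duality_cone_general C hCconv hCcone g hconc x₀ hx₀ hg₀ hcont
end

section
/- Let $\Omega=\mathbb{N}$ with $\mathcal{F}=2^{\mathbb{N}}$, $\mathbb{P}(\{n\})=2^{-n}$, and for each $n$ define $P_n(\{1\})=1-1/n$, $P_n(\{n\})=1/n$, $P_n(\{k\})=0$ otherwise. Then the family $\{dP_n/d\mathbb{P}\}_{n\in\mathbb{N}}$ is uniformly integrable in $L^1(\mathbb{P})$, and for $W(n)=n$ one has $\sup_n E_{P_n}[W]=2$ but $\sup_n E_{P_n}[W1_{\{W\ge N\}}]=1$ for every $N\ge 2$; in particular, $W\in L^1(\mathcal{P})\setminus L^1_u(\mathcal{P})$ for $\mathcal{P}=\{P_n\}$. -/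
open MeasureTheory ENNReal

/-- The reference measure `ℙ` on `ℕ` with `ℙ({n}) = 2^{-n}` for `n ≥ 1`. -/
noncomputable def Pref : Measure ℕ :=
  Measure.sum (fun n : ℕ => ((2 : ℝ≥0∞) ^ (n + 1))⁻¹ • Measure.dirac (n + 1))

/-- The measures `P_n` with `P_n({1}) = 1 - 1/n` and `P_n({n}) = 1/n`. -/
noncomputable def Pn (n : ℕ) : Measure ℕ :=
  (1 - (n : ℝ≥0∞)⁻¹) • Measure.dirac 1 + (n : ℝ≥0∞)⁻¹ • Measure.dirac n

/-- The density `dP_n/dℙ`. -/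
noncomputable def Dn (n : ℕ) (k : ℕ) : ℝ :=
  if k = n then 2 ^ n / n else if k = 1 then 2 * (1 - 1 / n) else 0

/-! The density of `P_n` with respect to `ℙ` exceeds `2` only at the point `n`, where it equals
`2^n/n` and carries `ℙ`-mass `1/n`. A threshold `C = 2^(M+2)` is therefore reached only for
`n > M`, which gives uniform integrability. On the other hand `W = id` puts `P_n`-mass
`n · (1/n) = 1` at the point `n` for every `n`, so no truncation level makes the tails
`E_{P_n}[W 1_{W ≥ N}]` uniformly small. -/

lemma integral_smul_dirac_add_smul_dirac {α E : Type*} [MeasurableSpace α]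
    [MeasurableSingletonClass α] [NormedAddCommGroup E] [NormedSpace ℝ E] [CompleteSpace E]
    {c d : ℝ≥0∞} (hc : c ≠ ∞) (hd : d ≠ ∞) (a b : α) (f : α → E) :
    ∫ x, f x ∂(c • Measure.dirac a + d • Measure.dirac b) = c.toReal • f a + d.toReal • f b := by
  rw [integral_add_measure ((integrable_dirac (by simp)).smul_measure hc)
    ((integrable_dirac (by simp)).smul_measure hd), integral_smul_measure,
    integral_smul_measure, integral_dirac, integral_dirac]

lemma integral_Pn {n : ℕ} (hn : 1 ≤ n) (f : ℕ → ℝ) :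
    ∫ k, f k ∂Pn n = (1 - 1 / n) * f 1 + 1 / n * f n := by
  have hinv_le : (n : ℝ≥0∞)⁻¹ ≤ 1 := ENNReal.inv_le_one.mpr (by exact_mod_cast hn)
  rw [Pn, integral_smul_dirac_add_smul_dirac (sub_ne_top one_ne_top)
    (inv_ne_top.mpr (by positivity)), ENNReal.toReal_sub_of_le hinv_le one_ne_top]
  simp [one_div]

lemma Pn_singleton_self {n : ℕ} (hn : 1 ≤ n) : Pn n {n} = (n : ℝ≥0∞)⁻¹ := by
  rcases eq_or_ne n 1 with rfl | h1
  · simp [Pn]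
  · simp [Pn, Ne.symm h1]

lemma Pn_singleton_one {n : ℕ} (h1 : n ≠ 1) : Pn n {1} = 1 - (n : ℝ≥0∞)⁻¹ := by
  simp [Pn, h1]

lemma Pn_singleton_of_ne {n k : ℕ} (h1 : k ≠ 1) (hn : k ≠ n) : Pn n {k} = 0 := by
  simp [Pn, Ne.symm h1, Ne.symm hn]

lemma Pref_singleton {k : ℕ} (hk : k ≠ 0) : Pref {k} = (2 ^ k)⁻¹ := by
  rw [Pref, Measure.sum_apply _ (measurableSet_singleton k), tsum_eq_single (k - 1)]
  · simp [Nat.sub_add_cancel (Nat.one_le_iff_ne_zero.mpr hk)]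
  · intro m hm
    simp [show m + 1 ≠ k by omega]

lemma Pn_eq_withDensity_Dn {n : ℕ} (hn : 1 ≤ n) :
    Pn n = Pref.withDensity (fun k => ENNReal.ofReal (Dn n k)) := by
  have hn0 : (0 : ℝ) < n := by exact_mod_cast hn
  refine Measure.ext_of_singleton fun k => ?_
  rw [withDensity_apply _ (measurableSet_singleton k), lintegral_singleton]
  by_cases hkn : k = n
  · subst hkn
    rw [Pn_singleton_self hn, Pref_singleton (by omega), Dn, if_pos rfl,
      ENNReal.ofReal_div_of_pos hn0, ENNReal.ofReal_pow zero_le_two, ofReal_natCast,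
      ENNReal.ofReal_ofNat, ENNReal.div_eq_inv_mul, mul_assoc,
      ENNReal.mul_inv_cancel (pow_ne_zero _ two_ne_zero) (pow_ne_top ofNat_ne_top), mul_one]
  by_cases hk1 : k = 1
  · subst hk1
    rw [Pn_singleton_one (Ne.symm hkn), Pref_singleton one_ne_zero, Dn, if_neg hkn, if_pos rfl,
      ENNReal.ofReal_mul zero_le_two, ENNReal.ofReal_sub _ (by positivity), one_div,
      ENNReal.ofReal_inv_of_pos hn0, ofReal_natCast, ENNReal.ofReal_one, ENNReal.ofReal_ofNat, pow_one, mul_comm, ← mul_assoc,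
      ENNReal.inv_mul_cancel two_ne_zero ofNat_ne_top, one_mul]
  · rw [Pn_singleton_of_ne hk1 hkn, Dn, if_neg hkn, if_neg hk1, ENNReal.ofReal_zero, zero_mul]

lemma Dn_le_two {n k : ℕ} (hk : k ≠ n) : Dn n k ≤ 2 := by
  rw [Dn, if_neg hk]
  split_ifs
  · have : (0 : ℝ) ≤ 1 / n := by positivity
    linarith
  · norm_num

lemma Dn_self_le (n : ℕ) : Dn n n ≤ 2 ^ n := by
  rw [Dn, if_pos rfl]
  rcases Nat.eq_zero_or_pos n with rfl | hn
  · simp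
  · exact div_le_self (by positivity) (by exact_mod_cast hn)

lemma setIntegral_Dn_singleton_self {n : ℕ} (hn : 1 ≤ n) :
    ∫ k in {n}, Dn n k ∂Pref = 1 / n := by
  rw [integral_singleton, measureReal_def, Pref_singleton (by omega), Dn, if_pos rfl,
    smul_eq_mul, toReal_inv, toReal_pow, toReal_ofNat]
  field_simp

lemma exists_integral_indicator_Dn_le {ε : ℝ} (hε : 0 < ε) : ∃ C : ℝ, ∀ n : ℕ, 1 ≤ n →
    ∫ k, Set.indicator {k : ℕ | C ≤ Dn n k} (Dn n) k ∂Pref ≤ ε := by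
  obtain ⟨M, hM⟩ := exists_nat_one_div_lt hε
  refine ⟨2 ^ (M + 2), fun n hn => ?_⟩
  have hsub : {k : ℕ | (2 : ℝ) ^ (M + 2) ≤ Dn n k} ⊆ {n} := fun k hk => by
    by_contra hkn
    have : (2 : ℝ) ^ 2 ≤ 2 ^ (M + 2) := pow_le_pow_right₀ one_le_two (by omega)
    linarith [Dn_le_two hkn, hk.out]
  rcases Set.subset_singleton_iff_eq.mp hsub with h | h
  · simp [h, hε.le]
  · have hC : n ∈ {k : ℕ | (2 : ℝ) ^ (M + 2) ≤ Dn n k} := h ▸ Set.mem_singleton n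
    have hMn : M + 2 ≤ n :=
      (pow_le_pow_iff_right₀ (one_lt_two : (1 : ℝ) < 2)).mp (hC.out.trans (Dn_self_le n))
    rw [h, integral_indicator (measurableSet_singleton n), setIntegral_Dn_singleton_self hn]
    calc (1 : ℝ) / n ≤ 1 / (M + 1) := by gcongr; exact_mod_cast (by omega : M + 1 ≤ n)
      _ ≤ ε := hM.le

lemma integral_natCast_Pn {n : ℕ} (hn : 1 ≤ n) : ∫ k, (k : ℝ) ∂Pn n = 2 - 1 / n := by
  rw [integral_Pn hn]
  field_simp
  ring

lemma integral_indicator_natCast_Pn {n : ℕ} (hn : 1 ≤ n) (s : Set ℕ) :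
    ∫ k, s.indicator (fun k => (k : ℝ)) k ∂Pn n
      = (1 - 1 / n) * s.indicator (fun k => (k : ℝ)) 1 + s.indicator 1 n := by
  rw [integral_Pn hn]
  by_cases hs : n ∈ s
  · simp [hs, show (n : ℝ) ≠ 0 by positivity]
  · simp [hs]

lemma iSup_integral_natCast_Pn : (⨆ n : {n : ℕ // 1 ≤ n}, ∫ k, (k : ℝ) ∂(Pn n)) = 2 := by
  have : Nonempty {n : ℕ // 1 ≤ n} := ⟨⟨1, le_rfl⟩⟩
  refine ciSup_eq_of_forall_le_of_forall_lt_exists_gt (fun ⟨n, hn⟩ => ?_) fun w hw => ?_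
  · rw [integral_natCast_Pn hn]
    linarith [show (0 : ℝ) ≤ 1 / n by positivity]
  · obtain ⟨m, hm⟩ := exists_nat_one_div_lt (sub_pos.mpr hw)
    refine ⟨⟨m + 1, Nat.le_add_left 1 m⟩, ?_⟩
    rw [integral_natCast_Pn (Nat.le_add_left 1 m)]
    push_cast
    linarith

lemma iSup_integral_tail_Pn {N : ℕ} (hN : 2 ≤ N) :
    (⨆ n : {n : ℕ // 1 ≤ n},
      ∫ k, Set.indicator {k : ℕ | N ≤ k} (fun k => (k : ℝ)) k ∂(Pn n)) = 1 := by
  have : Nonempty {n : ℕ // 1 ≤ n} := ⟨⟨1, le_rfl⟩⟩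
  have h1 : (1 : ℕ) ∉ {k : ℕ | N ≤ k} := Set.notMem_ofPred_iff.mpr (by omega)
  refine ciSup_eq_of_forall_le_of_forall_lt_exists_gt (fun ⟨n, hn⟩ => ?_) fun w hw => ?_
  · rw [integral_indicator_natCast_Pn hn, Set.indicator_of_notMem h1, mul_zero, zero_add]
    exact Set.indicator_le_self' (fun _ _ => zero_le_one) n
  · have hN1 : 1 ≤ N := by omega
    refine ⟨⟨N, hN1⟩, ?_⟩
    rw [integral_indicator_natCast_Pn hN1, Set.indicator_of_notMem h1, mul_zero, zero_add,
      Set.indicator_of_mem (by simp)]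
    exact hw

lemma not_forall_integral_tail_Pn_le : ¬ (∀ ε : ℝ, 0 < ε → ∃ N : ℝ, ∀ n : ℕ, 1 ≤ n →
    ∫ k, Set.indicator {k : ℕ | N ≤ (k : ℝ)} (fun k => (k : ℝ)) k ∂(Pn n) ≤ ε) := by
  intro h
  obtain ⟨N, hN⟩ := h (1 / 2) one_half_pos
  set n := max 1 ⌈N⌉₊
  have hn : 1 ≤ n := le_max_left _ _
  have hNn : N ≤ n := (Nat.le_ceil N).trans (by exact_mod_cast le_max_right _ _)
  have hcoef : 0 ≤ 1 - 1 / (n : ℝ) := by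
    rw [sub_nonneg, div_le_one (by positivity)]
    exact_mod_cast hn
  have hfirst : 0 ≤ {k : ℕ | N ≤ k}.indicator (fun k => (k : ℝ)) 1 :=
    Set.indicator_nonneg (fun k _ => k.cast_nonneg) 1
  have := hN n hn
  rw [integral_indicator_natCast_Pn hn,
    Set.indicator_of_mem (show n ∈ {k : ℕ | N ≤ k} from hNn) (1 : ℕ → ℝ), Pi.one_apply] at this
  nlinarith [mul_nonneg hcoef hfirst]

/-- The example: `{dP_n/dℙ}` is uniformly integrable, `sup_n E_{P_n}[W] = 2`
for `W(n) = n`, yet `sup_n E_{P_n}[W 1_{W ≥ N}] = 1` for all `N ≥ 2`; so `W`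
lies in `L¹(𝒫) \ L¹_u(𝒫)`. -/
theorem counterexample_L1u :
    -- density identification
    (∀ n : ℕ, 1 ≤ n → Pn n = Pref.withDensity (fun k => ENNReal.ofReal (Dn n k))) ∧
    -- uniform integrability of the densities
    (∀ ε : ℝ, 0 < ε → ∃ C : ℝ, ∀ n : ℕ, 1 ≤ n →
      ∫ k, Set.indicator {k : ℕ | C ≤ Dn n k} (Dn n) k ∂Pref ≤ ε) ∧
    -- sup of expectations of W equals 2
    (⨆ n : {n : ℕ // 1 ≤ n}, ∫ k, (k : ℝ) ∂(Pn n)) = 2 ∧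
    -- tails do not vanish uniformly
    (∀ N : ℕ, 2 ≤ N →
      (⨆ n : {n : ℕ // 1 ≤ n},
        ∫ k, Set.indicator {k : ℕ | N ≤ k} (fun k => (k : ℝ)) k ∂(Pn n)) = 1) ∧
    -- W ∈ L¹(𝒫) \ L¹_u(𝒫)
    ¬ (∀ ε : ℝ, 0 < ε → ∃ N : ℝ, ∀ n : ℕ, 1 ≤ n →
      ∫ k, Set.indicator {k : ℕ | N ≤ (k : ℝ)} (fun k => (k : ℝ)) k ∂(Pn n) ≤ ε) :=
  ⟨fun _ hn => Pn_eq_withDensity_Dn hn, fun _ hε => exists_integral_indicator_Dn_le hε,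
    iSup_integral_natCast_Pn, fun _ hN => iSup_integral_tail_Pn hN,
    not_forall_integral_tail_Pn_le⟩
end
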